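/- Let D be a converse invariant oriented graph and let u ∈ V(D). Let D' = 2D⁺_u be the digraph obtained by taking two disjoint copies of D and adding a single arc between the two copies of the vertex u (bridge-mirroring D at u). Then D' is converse invariant. -/

import Mathlib

open Finset Polynomial

/-- An oriented graph: loopless, at most one arc between any pair of vertices. -/
def IsOrgraph {V : Type*} (A : V → V → Prop) : Prop :=
  ∀ u v, A u v → u ≠ v ∧ ¬ A v u

/-- A tournament: loopless, exactly one arc between any two distinct vertices. -/
def IsTournament {W : Type*} (B : W → W → Prop) : Prop :=
  (∀ v, ¬ B v v) ∧ ∀ u v, u ≠ v → (B u v ↔ ¬ B v u)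

/-- The number of subdigraphs of `B` isomorphic to `A`: a subdigraph is a pair of a
vertex set and an arc relation contained in `B` with all endpoints in the vertex set. -/
noncomputable def copyCount {V W : Type*} (A : V → V → Prop) (B : W → W → Prop) : ℕ :=
  Nat.card {p : Set W × (W → W → Prop) //
    (∀ a b, p.2 a b → B a b ∧ a ∈ p.1 ∧ b ∈ p.1) ∧
    ∃ e : V ≃ p.1, ∀ a b, A a b ↔ p.2 (e a : W) (e b : W)}

/-- `A` is converse invariant: every finite tournament contains as many copies of `A`
as of its converse. -/
def ConverseInvariant {V : Type*} (A : V → V → Prop) : Prop :=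
  ∀ (W : Type) (_ : Fintype W) (B : W → W → Prop), IsTournament B →
    copyCount A B = copyCount (fun a b => A b a) B

/-- Out-degree. -/
noncomputable def outDeg {V : Type*} (A : V → V → Prop) (u : V) : ℕ :=
  Nat.card {v // A u v}

/-- In-degree. -/
noncomputable def inDeg {V : Type*} (A : V → V → Prop) (u : V) : ℕ :=
  Nat.card {v // A v u}

/-- The polynomial `P_D(x) = ∑_u (1+x)^{d⁺(u)} (1-x)^{d⁻(u)}`. -/
noncomputable def degPoly {V : Type*} [Fintype V] (A : V → V → Prop) : Polynomial ℤ :=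
  ∑ u : V, (1 + X) ^ outDeg A u * (1 - X) ^ inDeg A u

/-- `A` is an orientation of the simple graph `G`. -/
def IsOrientation {V : Type*} (G : SimpleGraph V) (A : V → V → Prop) : Prop :=
  (∀ u v, A u v → ¬ A v u) ∧ ∀ u v, G.Adj u v ↔ (A u v ∨ A v u)

/-- The disjoint union of two copies of a digraph. -/
def disjUnion2 {V : Type*} (A : V → V → Prop) : V ⊕ V → V ⊕ V → Prop :=
  fun x y => match x, y with
  | Sum.inl a, Sum.inl b => A a b
  | Sum.inr a, Sum.inr b => A a b
  | _, _ => False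

/-- Bridge-mirroring `A` at `u`: two disjoint copies of `A` plus one arc
between the two copies of `u`. -/
def bridgeMirror {V : Type*} (A : V → V → Prop) (u : V) : V ⊕ V → V ⊕ V → Prop :=
  fun x y => disjUnion2 A x y ∨ (x = Sum.inl u ∧ y = Sum.inr u)

/-!
Count injective arc-preserving maps instead of copies: there are `|Aut D|` of them per copy, and
`D` and `−D` have the same automorphisms, so `D` is converse invariant iff every tournament `T`
receives as many such maps from `D` as from `−D`. A map of `2D⁺_u` into `T` is a pair of maps of
`D` with disjoint images whose two images of `u` are joined in the right direction; as `T` is a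
tournament, exactly half of all disjoint pairs qualify. With the first map fixed, the second is a
map into the subtournament on the remaining vertices, so converse invariance of `D` reverses the
two copies one at a time. Finally `−(2D⁺_u) ≅ 2(−D)⁺_u` by exchanging the copies.
-/

open Function

section ArcEmbedding

variable {V V' W : Type*}

/-- Injective maps sending arcs to arcs; unlike a `RelEmbedding`, non-arcs may go to arcs. -/
abbrev ArcEmbedding (A : V → V → Prop) (B : W → W → Prop) : Type _ :=
  {e : V ↪ W // ∀ a b, A a b → B (e a) (e b)}

abbrev Copy (A : V → V → Prop) (B : W → W → Prop) : Type _ :=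
  {p : Set W × (W → W → Prop) //
    (∀ a b, p.2 a b → B a b ∧ a ∈ p.1 ∧ b ∈ p.1) ∧
    ∃ e : V ≃ p.1, ∀ a b, A a b ↔ p.2 (e a : W) (e b : W)}

variable {A : V → V → Prop} {B : W → W → Prop}

namespace ArcEmbedding

def toCopy (e : ArcEmbedding A B) : Copy A B :=
  ⟨(Set.range e.1, Relation.Map A e.1 e.1),
    fun _ _ ⟨x, y, hxy, hx, hy⟩ => hx ▸ hy ▸ ⟨e.2 x y hxy, ⟨x, rfl⟩, ⟨y, rfl⟩⟩,
    ⟨Equiv.ofInjective e.1 e.1.injective, fun a b =>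
      (Relation.map_apply_apply e.1.injective e.1.injective A a b).symm⟩⟩

theorem toCopy_surjective : Surjective (toCopy : ArcEmbedding A B → Copy A B) := by
  rintro ⟨⟨S, R⟩, hsub, e, he⟩
  refine ⟨⟨e.toEmbedding.trans (.subtype _), fun a b h => (hsub _ _ ((he a b).1 h)).1⟩, ?_⟩
  refine Subtype.ext (Prod.ext ((EquivLike.range_comp _ e).trans Subtype.range_coe) ?_)
  funext a b
  refine propext ⟨?_, fun h => ?_⟩
  · rintro ⟨x, y, hxy, rfl, rfl⟩
    exact (he x y).1 hxy
  · obtain ⟨-, ha, hb⟩ := hsub a b h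
    exact ⟨e.symm ⟨a, ha⟩, e.symm ⟨b, hb⟩, (he _ _).2 (by simpa using h),
      by simp, by simp⟩

def compRelIso {A' : V' → V' → Prop} (e : ArcEmbedding A' B) (σ : A ≃r A') :
    ArcEmbedding A B :=
  ⟨σ.toEquiv.toEmbedding.trans e.1, fun _ _ h => e.2 _ _ (σ.map_rel_iff.2 h)⟩

theorem toCopy_compRelIso (e : ArcEmbedding A B) (σ : A ≃r A) :
    (e.compRelIso σ).toCopy = e.toCopy := by
  refine Subtype.ext (Prod.ext (EquivLike.range_comp _ σ) ?_)
  funext _ _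
  refine propext ⟨?_, ?_⟩
  · rintro ⟨x, y, hxy, rfl, rfl⟩
    exact ⟨σ x, σ y, σ.map_rel_iff.2 hxy, rfl, rfl⟩
  · rintro ⟨x, y, hxy, rfl, rfl⟩
    refine ⟨σ.symm x, σ.symm y, σ.symm.map_rel_iff.2 hxy, ?_, ?_⟩ <;> simp [compRelIso]

theorem exists_eq_compRelIso_of_toCopy_eq {e e' : ArcEmbedding A B}
    (h : e'.toCopy = e.toCopy) : ∃ σ : A ≃r A, e' = e.compRelIso σ := by
  have hrange : Set.range e'.1 = Set.range e.1 := congrArg (·.1.1) h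
  have hrel : Relation.Map A e'.1 e'.1 = Relation.Map A e.1 e.1 := congrArg (·.1.2) h
  let σ : V ≃ V := (Equiv.ofInjective e'.1 e'.1.injective).trans
    ((Equiv.setCongr hrange).trans (Equiv.ofInjective e.1 e.1.injective).symm)
  have hσ (x : V) : e.1 (σ x) = e'.1 x := Equiv.apply_ofInjective_symm e.1.injective _
  refine ⟨⟨σ, fun {a b} => ?_⟩, Subtype.ext (Embedding.ext fun x => (hσ x).symm)⟩
  rw [← Relation.map_apply_apply e.1.injective e.1.injective A (σ a), hσ, hσ, ← hrel,
    Relation.map_apply_apply e'.1.injective e'.1.injective]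

noncomputable def relIsoEquivFiber {e : ArcEmbedding A B} {p : Copy A B} (hp : e.toCopy = p) :
    (A ≃r A) ≃ {e' : ArcEmbedding A B // e'.toCopy = p} :=
  .ofBijective (fun σ => ⟨e.compRelIso σ, (toCopy_compRelIso e σ).trans hp⟩)
    ⟨fun _ _ h => RelIso.ext fun x =>
        e.1.injective (congrArg (fun e' : ArcEmbedding A B => e'.1 x) (congrArg Subtype.val h)),
      fun ⟨_, h⟩ => (exists_eq_compRelIso_of_toCopy_eq (h.trans hp.symm)).imp
        fun _ hσ => Subtype.ext hσ.symm⟩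

end ArcEmbedding

theorem card_arcEmbedding_eq_copyCount_mul (A : V → V → Prop) (B : W → W → Prop) :
    Nat.card (ArcEmbedding A B) = copyCount A B * Nat.card (A ≃r A) := by
  rw [copyCount, ← Nat.card_prod]
  refine Nat.card_congr ((Equiv.sigmaFiberEquiv ArcEmbedding.toCopy).symm.trans
    ((Equiv.sigmaCongrRight fun p => ?_).trans (Equiv.sigmaEquivProd _ _)))
  exact (ArcEmbedding.relIsoEquivFiber (surjInv_eq ArcEmbedding.toCopy_surjective p)).symm

theorem card_arcEmbedding_congr {A' : V' → V' → Prop} (σ : A ≃r A') :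
    Nat.card (ArcEmbedding A B) = Nat.card (ArcEmbedding A' B) :=
  Nat.card_congr
    { toFun e := e.compRelIso σ.symm
      invFun e := e.compRelIso σ
      left_inv e := by ext; simp [ArcEmbedding.compRelIso]
      right_inv e := by ext; simp [ArcEmbedding.compRelIso] }

theorem card_relIso_swap (A : V → V → Prop) :
    Nat.card (swap A ≃r swap A) = Nat.card (A ≃r A) :=
  Nat.card_congr ⟨RelIso.swap, RelIso.swap, fun _ => rfl, fun _ => rfl⟩

theorem converseInvariant_iff_card_arcEmbedding [Finite V] (A : V → V → Prop) :
    ConverseInvariant A ↔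
      ∀ (W : Type) (_ : Fintype W) (B : W → W → Prop), IsTournament B →
        Nat.card (ArcEmbedding A B) = Nat.card (ArcEmbedding (swap A) B) := by
  have : Finite (A ≃r A) := .of_injective _ RelIso.toEquiv_injective
  have hpos : 0 < Nat.card (A ≃r A) := Nat.card_pos_iff.2 ⟨⟨.refl A⟩, this⟩
  refine forall₄_congr fun _ _ B _ => ?_
  rw [card_arcEmbedding_eq_copyCount_mul A B, card_arcEmbedding_eq_copyCount_mul (swap A) B,
    card_relIso_swap A, Nat.mul_left_inj hpos.ne']

end ArcEmbedding

theorem IsTournament.restrict {W : Type*} {B : W → W → Prop} (hB : IsTournament B)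
    (S : Set W) : IsTournament fun a b : S => B a b :=
  ⟨fun v => hB.1 v, fun a b hab => hB.2 a b (Subtype.coe_injective.ne hab)⟩

section DisjointArcEmbeddings

variable {V W : Type*}

abbrev DisjointArcEmbeddings (A₁ A₂ : V → V → Prop) (B : W → W → Prop) : Type _ :=
  {fg : ArcEmbedding A₁ B × ArcEmbedding A₂ B // ∀ x y, fg.1.1 x ≠ fg.2.1 y}

variable {A A₁ A₂ : V → V → Prop} {B : W → W → Prop}

def DisjointArcEmbeddings.comm :
    DisjointArcEmbeddings A₁ A₂ B ≃ DisjointArcEmbeddings A₂ A₁ B where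
  toFun p := ⟨p.1.swap, fun x y h => p.2 y x h.symm⟩
  invFun p := ⟨p.1.swap, fun x y h => p.2 y x h.symm⟩

def DisjointArcEmbeddings.sigmaEquiv :
    DisjointArcEmbeddings A₁ A₂ B ≃
      Σ f : ArcEmbedding A₁ B, ArcEmbedding A₂ fun a b : ↥(Set.range f.1)ᶜ => B a b where
  toFun p := ⟨p.1.1, ⟨⟨fun x => ⟨p.1.2.1 x, fun ⟨y, hy⟩ => p.2 y x hy⟩,
      fun _ _ h => p.1.2.1.injective (congrArg Subtype.val h)⟩, fun a b h => p.1.2.2 a b h⟩⟩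
  invFun q := ⟨(q.1, ⟨q.2.1.trans (Embedding.subtype _), fun a b h => q.2.2 a b h⟩),
    fun x y h => (q.2.1 y).2 ⟨x, h⟩⟩

theorem card_disjointArcEmbeddings_swap_right {W : Type} [Finite V] [Finite W]
    {B : W → W → Prop} (A₁ : V → V → Prop) (hA₂ : ConverseInvariant A₂)
    (hB : IsTournament B) :
    Nat.card (DisjointArcEmbeddings A₁ A₂ B) =
      Nat.card (DisjointArcEmbeddings A₁ (swap A₂) B) := by
  rw [Nat.card_congr DisjointArcEmbeddings.sigmaEquiv,
    Nat.card_congr DisjointArcEmbeddings.sigmaEquiv]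
  refine Nat.card_congr (Equiv.sigmaCongrRight fun f => (Finite.card_eq.1 ?_).some)
  exact (converseInvariant_iff_card_arcEmbedding A₂).1 hA₂ _ (.ofFinite _) _ (hB.restrict _)

theorem card_disjointArcEmbeddings_swap {W : Type} [Finite V] [Finite W] {B : W → W → Prop}
    (hA : ConverseInvariant A) (hB : IsTournament B) :
    Nat.card (DisjointArcEmbeddings A A B) =
      Nat.card (DisjointArcEmbeddings (swap A) (swap A) B) := by
  rw [card_disjointArcEmbeddings_swap_right A hA hB, Nat.card_congr DisjointArcEmbeddings.comm,
    card_disjointArcEmbeddings_swap_right _ hA hB]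

def arcEmbeddingBridgeMirrorEquiv (A : V → V → Prop) (u : V) (B : W → W → Prop) :
    ArcEmbedding (bridgeMirror A u) B ≃
      {fg : DisjointArcEmbeddings A A B // B (fg.1.1.1 u) (fg.1.2.1 u)} where
  toFun e := ⟨⟨(⟨⟨fun x => e.1 (.inl x), fun _ _ h => Sum.inl.inj (e.1.injective h)⟩,
        fun _ _ h => e.2 _ _ (.inl h)⟩,
      ⟨⟨fun x => e.1 (.inr x), fun _ _ h => Sum.inr.inj (e.1.injective h)⟩,
        fun _ _ h => e.2 _ _ (.inl h)⟩),
      fun _ _ h => Sum.inl_ne_inr (e.1.injective h)⟩,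
    e.2 _ _ (.inr ⟨rfl, rfl⟩)⟩
  invFun p := ⟨⟨Sum.elim p.1.1.1.1 p.1.1.2.1, by
      rintro (x | x) (y | y) h
      · exact congrArg Sum.inl (p.1.1.1.1.injective h)
      · exact absurd h (p.1.2 x y)
      · exact absurd h.symm (p.1.2 y x)
      · exact congrArg Sum.inr (p.1.1.2.1.injective h)⟩, by
    rintro s t (h | ⟨rfl, rfl⟩)
    · rcases s with a | a <;> rcases t with b | b
      · exact p.1.1.1.2 a b h
      · exact h.elim
      · exact h.elim
      · exact p.1.1.2.2 a b h
    · exact p.2⟩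
  left_inv e := Subtype.ext (Embedding.ext fun s => by cases s <;> rfl)

/-- In a tournament exactly one of the two possible bridge arcs is present, and swapping the
two embeddings moves between the two cases. -/
theorem card_disjointArcEmbeddings_eq_two_mul [Finite V] [Finite W] (hB : IsTournament B)
    (A : V → V → Prop) (u : V) :
    Nat.card (DisjointArcEmbeddings A A B) = 2 * Nat.card (ArcEmbedding (bridgeMirror A u) B) := by
  classical
  let P : DisjointArcEmbeddings A A B → Prop := fun fg => B (fg.1.1.1 u) (fg.1.2.1 u)
  have hflip : {fg // ¬ P fg} ≃ {fg // P fg} :=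
    Equiv.subtypeEquiv DisjointArcEmbeddings.comm fun fg => (hB.2 _ _ (fg.2 u u).symm).symm
  rw [← Nat.card_congr (Equiv.sumCompl P), Nat.card_sum, Nat.card_congr hflip, ← two_mul,
    Nat.card_congr (arcEmbeddingBridgeMirrorEquiv A u B)]

end DisjointArcEmbeddings

def bridgeMirrorSwapRelIso {V : Type*} (A : V → V → Prop) (u : V) :
    swap (bridgeMirror A u) ≃r bridgeMirror (swap A) u :=
  ⟨Equiv.sumComm V V, by
    rintro (a | a) (b | b) <;> simp [bridgeMirror, disjUnion2, swap, and_comm]⟩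

theorem stmt_14_general {V : Type} [Fintype V]
    (A : V → V → Prop) (hCI : ConverseInvariant A) (u : V) :
    ConverseInvariant (bridgeMirror A u) := by
  refine (converseInvariant_iff_card_arcEmbedding _).2 fun W _ B hB => ?_
  have h := card_disjointArcEmbeddings_swap hCI hB
  rw [card_disjointArcEmbeddings_eq_two_mul hB A u,
    card_disjointArcEmbeddings_eq_two_mul hB (swap A) u] at h
  rw [card_arcEmbedding_congr (bridgeMirrorSwapRelIso A u)]
  omega

/-- Bridge-mirroring a converse invariant orgraph at any vertex yields a
converse invariant orgraph. -/
theorem stmt_14 {V : Type} [Fintype V]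
    (A : V → V → Prop) (hA : IsOrgraph A) (hCI : ConverseInvariant A) (u : V) :
    ConverseInvariant (bridgeMirror A u) :=
  stmt_14_general A hCI u
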